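/- arXiv:1901.03767 — 6 statements merged into one kernel-verified Lean document; each statement's English description precedes it below -/
import Mathlib

section
/- The group presented by ⟨a₁, a₂, b₁, b₂, c₁, c₂, c₃, d₁, d₂ | a₂b₁b₂a₂⁻¹a₁⁻¹b₂⁻¹c₁c₂c₃, b₁c₁d₁⁻¹, d₁c₂d₂⁻¹, d₂c₃a₁⁻¹⟩ is isomorphic to ℤ² * F₄. -/
/-!
The last three relators say `d₁ = b₁c₁`, `d₂ = d₁c₂` and `a₁ = d₂c₃`, so `d₁`, `d₂` and `a₁` can be
eliminated, with `a₁ = b₁x` for `x = c₁c₂c₃`. The first relator then reads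
`a₂(b₁b₂)a₂⁻¹ = x⁻¹b₂b₁x`, i.e. `t = b₂⁻¹xa₂` commutes with `z = b₁b₂`. Trading `a₂, b₁, c₃` for
`t, z, x`, the group is generated by `t, z, b₂, c₁, c₂, x` subject only to `[t, z] = 1`, which is a
presentation of `ℤ² * F₄`.
-/

open Multiplicative

namespace Commute

variable {H : Type*} [Group H] {t z : H}

def zpowersPairHom (h : Commute t z) : Multiplicative (ℤ × ℤ) →* H :=
  ((zpowersHom H t).noncommCoprod (zpowersHom H z) fun m n ↦ h.zpow_zpow m.toAdd n.toAdd).comp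
    (MulEquiv.prodMultiplicative ℤ ℤ).toMonoidHom

@[simp]
lemma zpowersPairHom_ofAdd (h : Commute t z) (m n : ℤ) :
    h.zpowersPairHom (ofAdd (m, n)) = t ^ m * z ^ n :=
  rfl

end Commute

lemma Multiplicative.ofAdd_int_prod (m n : ℤ) :
    ofAdd (m, n) = ofAdd ((1 : ℤ), (0 : ℤ)) ^ m * ofAdd ((0 : ℤ), (1 : ℤ)) ^ n := by
  simp [← ofAdd_zsmul, ← ofAdd_add]

lemma MonoidHom.ext_mint_prod {H : Type*} [Group H] {f g : Multiplicative (ℤ × ℤ) →* H}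
    (h₁ : f (ofAdd (1, 0)) = g (ofAdd (1, 0))) (h₂ : f (ofAdd (0, 1)) = g (ofAdd (0, 1))) :
    f = g :=
  MonoidHom.ext fun x ↦ by
    rw [← ofAdd_toAdd x, ofAdd_int_prod]
    simp only [map_mul, map_zpow, h₁, h₂]

namespace NineGenerator

open Monoid.Coprod (inl inr)

def relators : Set (FreeGroup (Fin 9)) :=
  {FreeGroup.of 1 * FreeGroup.of 2 * FreeGroup.of 3 * (FreeGroup.of 1)⁻¹ *
      (FreeGroup.of 0)⁻¹ * (FreeGroup.of 3)⁻¹ * FreeGroup.of 4 * FreeGroup.of 5 *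
      FreeGroup.of 6,
    FreeGroup.of 2 * FreeGroup.of 4 * (FreeGroup.of 7)⁻¹,
    FreeGroup.of 7 * FreeGroup.of 5 * (FreeGroup.of 8)⁻¹,
    FreeGroup.of 8 * FreeGroup.of 6 * (FreeGroup.of 0)⁻¹}

abbrev Γ := PresentedGroup relators

abbrev G := Monoid.Coprod (Multiplicative (ℤ × ℤ)) (FreeGroup (Fin 4))

local notation "a₁" => (PresentedGroup.of 0 : Γ)
local notation "a₂" => (PresentedGroup.of 1 : Γ)
local notation "b₁" => (PresentedGroup.of 2 : Γ)
local notation "b₂" => (PresentedGroup.of 3 : Γ)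
local notation "c₁" => (PresentedGroup.of 4 : Γ)
local notation "c₂" => (PresentedGroup.of 5 : Γ)
local notation "c₃" => (PresentedGroup.of 6 : Γ)
local notation "d₁" => (PresentedGroup.of 7 : Γ)
local notation "d₂" => (PresentedGroup.of 8 : Γ)

local notation "T" => (inl (ofAdd (1, 0)) : G)
local notation "Z" => (inl (ofAdd (0, 1)) : G)
local notation "B" => (inr (FreeGroup.of 0) : G)
local notation "C₁" => (inr (FreeGroup.of 1) : G)
local notation "C₂" => (inr (FreeGroup.of 2) : G)
local notation "X" => (inr (FreeGroup.of 3) : G)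

lemma d₁_eq : d₁ = b₁ * c₁ :=
  (PresentedGroup.mk_eq_mk_of_mul_inv_mem (by simp [relators])).symm

lemma d₂_eq : d₂ = b₁ * c₁ * c₂ := by
  rw [← d₁_eq]
  exact (PresentedGroup.mk_eq_mk_of_mul_inv_mem (by simp [relators])).symm

lemma a₁_eq : a₁ = b₁ * c₁ * c₂ * c₃ := by
  rw [← d₂_eq]
  exact (PresentedGroup.mk_eq_mk_of_mul_inv_mem (by simp [relators])).symm

lemma first_relation : a₂ * b₁ * b₂ * a₂⁻¹ * a₁⁻¹ * b₂⁻¹ * c₁ * c₂ * c₃ = 1 :=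
  PresentedGroup.one_of_mem (by simp [relators])

def t : Γ := b₂⁻¹ * (c₁ * c₂ * c₃) * a₂

def z : Γ := b₁ * b₂

lemma commute_t_z : Commute t z :=
  calc t * z
      = b₂⁻¹ * (c₁ * c₂ * c₃) * (a₂ * b₁ * b₂ * a₂⁻¹ * a₁⁻¹ * b₂⁻¹ * c₁ * c₂ * c₃) *
          (c₁ * c₂ * c₃)⁻¹ * b₂ * a₁ * a₂ := by simp only [t, z]; group
    _ = a₁ * a₂ := by rw [first_relation]; group
    _ = z * t := by rw [a₁_eq, t, z]; group

lemma commute_T_Z : Commute T Z := (Commute.all _ _).map inl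

/-- Solve `t = b₂⁻¹xa₂`, `z = b₁b₂`, `x = c₁c₂c₃` and the last three relators for the original
generators, with `T, Z, B, C₁, C₂, X` standing for `t, z, b₂, c₁, c₂, x`. -/
def toCoprodGen : Fin 9 → G :=
  ![Z * B⁻¹ * X, X⁻¹ * B * T, Z * B⁻¹, B, C₁, C₂, C₂⁻¹ * C₁⁻¹ * X, Z * B⁻¹ * C₁, Z * B⁻¹ * C₁ * C₂]

open scoped commutatorElement in
lemma lift_toCoprodGen_eq_one : ∀ r ∈ relators, FreeGroup.lift toCoprodGen r = 1 := by
  rintro r (rfl | rfl | rfl | rfl) <;>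
    simp only [toCoprodGen, map_mul, map_inv, FreeGroup.lift_apply_of, Matrix.cons_val,
      mul_inv_rev, inv_inv]
  · calc _ = X⁻¹ * B * ⁅T, Z⁆ * (X⁻¹ * B)⁻¹ := by rw [commutatorElement_def]; group
      _ = 1 := by rw [commutatorElement_eq_one_iff_commute.2 commute_T_Z]; group
  all_goals group

def toCoprod : Γ →* G := PresentedGroup.toGroup lift_toCoprodGen_eq_one

def ofCoprod : G →* Γ :=
  Monoid.Coprod.lift commute_t_z.zpowersPairHom (FreeGroup.lift ![b₂, c₁, c₂, c₁ * c₂ * c₃])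

@[simp]
lemma toCoprod_of (i : Fin 9) : toCoprod (.of i) = toCoprodGen i :=
  PresentedGroup.toGroup.of _

@[simp] lemma ofCoprod_T : ofCoprod T = t := by simp [ofCoprod]
@[simp] lemma ofCoprod_Z : ofCoprod Z = z := by simp [ofCoprod]
@[simp] lemma ofCoprod_B : ofCoprod B = b₂ := by simp [ofCoprod]
@[simp] lemma ofCoprod_C₁ : ofCoprod C₁ = c₁ := by simp [ofCoprod]
@[simp] lemma ofCoprod_C₂ : ofCoprod C₂ = c₂ := by simp [ofCoprod]
@[simp] lemma ofCoprod_X : ofCoprod X = c₁ * c₂ * c₃ := by simp [ofCoprod]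

lemma ofCoprod_comp_toCoprod : ofCoprod.comp toCoprod = .id Γ := by
  refine PresentedGroup.ext fun i ↦ ?_
  fin_cases i <;>
    simp only [MonoidHom.comp_apply, MonoidHom.id_apply, Fin.zero_eta, Fin.mk_one,
      Fin.reduceFinMk, toCoprod_of, toCoprodGen, Matrix.cons_val, map_mul, map_inv, ofCoprod_T,
      ofCoprod_Z, ofCoprod_B, ofCoprod_C₁, ofCoprod_C₂, ofCoprod_X, t, z, a₁_eq, d₁_eq, d₂_eq] <;>
    group

lemma toCoprod_comp_ofCoprod : toCoprod.comp ofCoprod = .id G := by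
  refine Monoid.Coprod.hom_ext (MonoidHom.ext_mint_prod ?_ ?_) (FreeGroup.ext_hom _ _ fun j ↦ ?_)
  on_goal 3 => fin_cases j
  all_goals
    simp only [MonoidHom.comp_apply, MonoidHom.id_apply, Fin.zero_eta, Fin.mk_one,
      Fin.reduceFinMk, ofCoprod_T, ofCoprod_Z, ofCoprod_B, ofCoprod_C₁, ofCoprod_C₂, ofCoprod_X, t,
      z, map_mul, map_inv, toCoprod_of, toCoprodGen, Matrix.cons_val] <;>
    group

def mulEquivCoprod : Γ ≃* G :=
  toCoprod.toMulEquiv ofCoprod ofCoprod_comp_toCoprod toCoprod_comp_ofCoprod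

end NineGenerator

/-- ⟨a₁, a₂, b₁, b₂, c₁, c₂, c₃, d₁, d₂ |
      a₂b₁b₂a₂⁻¹a₁⁻¹b₂⁻¹c₁c₂c₃, b₁c₁d₁⁻¹, d₁c₂d₂⁻¹, d₂c₃a₁⁻¹⟩ ≅ ℤ² * F₄.
Generators: 0 ↦ a₁, 1 ↦ a₂, 2 ↦ b₁, 3 ↦ b₂, 4 ↦ c₁, 5 ↦ c₂, 6 ↦ c₃, 7 ↦ d₁, 8 ↦ d₂. -/
theorem stmt_3 :
    Nonempty
      (PresentedGroup
          ({FreeGroup.of 1 * FreeGroup.of 2 * FreeGroup.of 3 * (FreeGroup.of 1)⁻¹ *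
              (FreeGroup.of 0)⁻¹ * (FreeGroup.of 3)⁻¹ * FreeGroup.of 4 * FreeGroup.of 5 *
              FreeGroup.of 6,
            FreeGroup.of 2 * FreeGroup.of 4 * (FreeGroup.of 7)⁻¹,
            FreeGroup.of 7 * FreeGroup.of 5 * (FreeGroup.of 8)⁻¹,
            FreeGroup.of 8 * FreeGroup.of 6 * (FreeGroup.of 0)⁻¹} : Set (FreeGroup (Fin 9))) ≃*
        Monoid.Coprod (Multiplicative (ℤ × ℤ)) (FreeGroup (Fin 4))) :=
  ⟨NineGenerator.mulEquivCoprod⟩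
end

section
/- Let c ≥ 1 be a natural number and define f : ℕ → ℕ recursively by f(0) = 0 and f(n) = 1 + max { Σᵢ f(nᵢ) : (nᵢ) a finite sequence of nonnegative integers with Σᵢ nᵢ ≤ n + c and each nᵢ < n }. Then for every n ≥ 1, the value f(n-1) appears as a summand in some maximizing sequence defining f(n); more precisely, there is a finite sequence (nᵢ) with Σᵢ nᵢ ≤ n + c, each nᵢ < n, n₁ = n - 1, and f(n) = 1 + Σᵢ f(nᵢ). -/
/-!
Write `T n` for the largest value `∑ f(mᵢ)` over lists with `∑ mᵢ ≤ c + 1` and all `mᵢ < n`.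
We show `f n = 1 + f (n - 1) + T n` by strong induction; an optimal list for `T n` with `n - 1`
prepended is then the required maximizing sequence. The lower bound is that prepending. For the
upper bound, take a feasible list for `f n`. If it contains `n - 1`, the rest fits the budget of
`T n`. Otherwise all entries are `< n - 1`, and an entry `e ≥ 1` can be traded for `e - 1`: the
induction hypothesis gives `f e ≤ 1 + f (e - 1) + T n`, and the traded list is feasible for
`f (n - 1)`, whose budget `n - 1 + c` is exactly one less.
-/

def feasibleSums (f : ℕ → ℕ) (B cap : ℕ) : Set ℕ :=
  {s | ∃ l : List ℕ, l.sum ≤ B ∧ (∀ m ∈ l, m < cap) ∧ s = (l.map f).sum}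

namespace feasibleSums

variable {f : ℕ → ℕ} {B cap : ℕ}

lemma mem_of_feasible {l : List ℕ} (hsum : l.sum ≤ B) (hcap : ∀ m ∈ l, m < cap) :
    (l.map f).sum ∈ feasibleSums f B cap :=
  ⟨l, hsum, hcap, rfl⟩

lemma nonempty : (feasibleSums f B cap).Nonempty :=
  ⟨_, mem_of_feasible (l := []) (Nat.zero_le _) (by simp)⟩

lemma mono {B' cap' : ℕ} (hB : B ≤ B') (hcap : cap ≤ cap') :
    feasibleSums f B cap ⊆ feasibleSums f B' cap' := by
  rintro _ ⟨l, hsum, hlt, rfl⟩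
  exact mem_of_feasible (hsum.trans hB) fun m hm => (hlt m hm).trans_le hcap

lemma sum_map_le_mul_sum (hf0 : f 0 = 0) {l : List ℕ} (hcap : ∀ m ∈ l, m < cap) :
    (l.map f).sum ≤ (Finset.range cap).sup f * l.sum := by
  set K := (Finset.range cap).sup f
  have hpoint : ∀ m ∈ l, f m ≤ K * m := by
    intro m hm
    rcases Nat.eq_zero_or_pos m with rfl | hpos
    · simp [hf0]
    · calc f m ≤ K := Finset.le_sup (Finset.mem_range.2 (hcap m hm))
        _ ≤ K * m := Nat.le_mul_of_pos_right K hpos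
  calc (l.map f).sum ≤ (l.map (K * ·)).sum := List.sum_le_sum hpoint
    _ = K * l.sum := by rw [List.sum_map_mul_left, List.map_id']

-- `f 0 = 0` is what keeps the sums bounded: otherwise zeros could be appended indefinitely.
lemma bddAbove (hf0 : f 0 = 0) : BddAbove (feasibleSums f B cap) := by
  refine ⟨(Finset.range cap).sup f * B, ?_⟩
  rintro _ ⟨l, hsum, hcap, rfl⟩
  exact (sum_map_le_mul_sum hf0 hcap).trans (Nat.mul_le_mul_left _ hsum)

lemma le_sSup (hf0 : f 0 = 0) {l : List ℕ} (hsum : l.sum ≤ B) (hcap : ∀ m ∈ l, m < cap) :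
    (l.map f).sum ≤ sSup (feasibleSums f B cap) :=
  le_csSup (bddAbove hf0) (mem_of_feasible hsum hcap)

lemma exists_sum_map_eq_sSup (hf0 : f 0 = 0) :
    ∃ l : List ℕ, l.sum ≤ B ∧ (∀ m ∈ l, m < cap) ∧
      (l.map f).sum = sSup (feasibleSums f B cap) := by
  obtain ⟨l, hsum, hcap, h⟩ := Nat.sSup_mem nonempty (bddAbove (f := f) (B := B) (cap := cap) hf0)
  exact ⟨l, hsum, hcap, h.symm⟩

lemma sSup_mono (hf0 : f 0 = 0) {B' cap' : ℕ} (hB : B ≤ B') (hcap : cap ≤ cap') :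
    sSup (feasibleSums f B cap) ≤ sSup (feasibleSums f B' cap') :=
  csSup_le_csSup (bddAbove hf0) nonempty (mono hB hcap)

end feasibleSums

open feasibleSums

section Recursion

variable {c : ℕ} {f : ℕ → ℕ} (hf0 : f 0 = 0)
  (hf : ∀ n : ℕ, 1 ≤ n → f n = 1 + sSup (feasibleSums f (n + c) n))
include hf0 hf

lemma add_sSup_le_self {n : ℕ} (hn : 1 ≤ n) :
    f (n - 1) + sSup (feasibleSums f (c + 1) n) + 1 ≤ f n := by
  obtain ⟨l, hsum, hcap, hl⟩ := exists_sum_map_eq_sSup (f := f) (B := c + 1) (cap := n) hf0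
  have := le_sSup hf0 (l := (n - 1) :: l) (B := n + c) (cap := n)
    (by simp only [List.sum_cons]; omega)
    (List.forall_mem_cons.2 ⟨by omega, hcap⟩)
  simp only [List.map_cons, List.sum_cons] at this
  rw [hf n hn]
  omega

lemma sum_map_le_of_feasible {n : ℕ} (hn : 1 ≤ n)
    (ih : ∀ e < n, 1 ≤ e → f e ≤ f (e - 1) + sSup (feasibleSums f (c + 1) e) + 1)
    {l : List ℕ} (hsum : l.sum ≤ n + c) (hcap : ∀ m ∈ l, m < n) :
    (l.map f).sum ≤ f (n - 1) + sSup (feasibleSums f (c + 1) n) := by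
  by_cases hmem : n - 1 ∈ l
  · have hrest := le_sSup hf0 (l := l.erase (n - 1)) (B := c + 1) (cap := n)
      (by have := List.sum_erase hmem; omega)
      (fun m hm => hcap m (List.mem_of_mem_erase hm))
    rw [← List.sum_map_erase f hmem]
    omega
  have hlt : ∀ m ∈ l, m < n - 1 := fun m hm => by
    have := hcap m hm
    have : m ≠ n - 1 := fun h => hmem (h ▸ hm)
    omega
  by_cases hzero : ∀ m ∈ l, m = 0
  · rw [List.sum_eq_zero fun x hx => by
      obtain ⟨m, hm, rfl⟩ := List.mem_map.1 hx
      rw [hzero m hm, hf0]]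
    exact Nat.zero_le _
  obtain ⟨e, he, he0⟩ : ∃ e ∈ l, e ≠ 0 := by simpa using hzero
  have hen := hlt e he
  have hfe := ih e (by omega) (by omega)
  have hTe := sSup_mono hf0 (f := f) (le_refl (c + 1)) (hcap e he).le
  have htraded := le_sSup hf0 (l := (e - 1) :: l.erase e) (B := n - 1 + c) (cap := n - 1)
    (by have := List.sum_erase he; simp only [List.sum_cons]; omega)
    (List.forall_mem_cons.2 ⟨by omega, fun m hm => hlt m (List.mem_of_mem_erase hm)⟩)
  simp only [List.map_cons, List.sum_cons] at htraded
  rw [← List.sum_map_erase f he, hf (n - 1) (by omega)]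
  omega

lemma le_add_sSup {n : ℕ} (hn : 1 ≤ n) :
    f n ≤ f (n - 1) + sSup (feasibleSums f (c + 1) n) + 1 := by
  induction n using Nat.strong_induction_on with
  | _ n ih =>
  have hbound : sSup (feasibleSums f (n + c) n) ≤ f (n - 1) + sSup (feasibleSums f (c + 1) n) :=
    csSup_le nonempty <| by
      rintro _ ⟨l, hsum, hcap, rfl⟩
      exact sum_map_le_of_feasible hf0 hf hn ih hsum hcap
  rw [hf n hn]
  omega

lemma eq_add_sSup {n : ℕ} (hn : 1 ≤ n) :
    f n = f (n - 1) + sSup (feasibleSums f (c + 1) n) + 1 :=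
  le_antisymm (le_add_sSup hf0 hf hn) (add_sSup_le_self hf0 hf hn)

end Recursion

theorem stmt_4_general (c : ℕ) (f : ℕ → ℕ) (hf0 : f 0 = 0)
    (hf : ∀ n : ℕ, 1 ≤ n →
      f n = 1 + sSup {s : ℕ | ∃ l : List ℕ,
        l.sum ≤ n + c ∧ (∀ m ∈ l, m < n) ∧ s = (l.map f).sum}) :
    ∀ n : ℕ, 1 ≤ n → ∃ l : List ℕ,
      l.sum ≤ n + c ∧ (∀ m ∈ l, m < n) ∧ (n - 1) ∈ l ∧ f n = 1 + (l.map f).sum := by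
  intro n hn
  obtain ⟨l, hsum, hcap, hl⟩ := exists_sum_map_eq_sSup (f := f) (B := c + 1) (cap := n) hf0
  refine ⟨(n - 1) :: l, ?_, List.forall_mem_cons.2 ⟨by omega, hcap⟩, List.mem_cons_self, ?_⟩
  · simp only [List.sum_cons]
    omega
  · rw [eq_add_sSup hf0 hf hn, List.map_cons, List.sum_cons, hl]
    omega

/-- If f satisfies f(0)=0 and f(n) = 1 + max { Σ f(nᵢ) : Σ nᵢ ≤ n+c, nᵢ < n }, then for
every n ≥ 1 there is a maximizing sequence in which n-1 appears. -/
theorem stmt_4 (c : ℕ) (hc : 1 ≤ c) (f : ℕ → ℕ) (hf0 : f 0 = 0)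
    (hf : ∀ n : ℕ, 1 ≤ n →
      f n = 1 + sSup {s : ℕ | ∃ l : List ℕ,
        l.sum ≤ n + c ∧ (∀ m ∈ l, m < n) ∧ s = (l.map f).sum}) :
    ∀ n : ℕ, 1 ≤ n → ∃ l : List ℕ,
      l.sum ≤ n + c ∧ (∀ m ∈ l, m < n) ∧ (n - 1) ∈ l ∧ f n = 1 + (l.map f).sum :=
  stmt_4_general c f hf0 hf
end

section
/- Let c ≥ 1 be a natural number and define f : ℕ → ℕ by f(0) = 0 and f(n) = 1 + max { Σᵢ f(nᵢ) : finite sequences with Σᵢ nᵢ ≤ n + c and each nᵢ < n }. Then the first difference f(n) - f(n-1) is nondecreasing in n for n ≥ 1; i.e., for all n ≥ 2, f(n) - f(n-1) ≥ f(n-1) - f(n-2). -/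
private lemma mapsum_le (f : ℕ → ℕ) (C : ℕ) :
    ∀ l : List ℕ, (∀ x ∈ l, f x ≤ x * C) → (l.map f).sum ≤ l.sum * C := by
  intro l
  induction l with
  | nil => simp
  | cons a t ih =>
    intro h
    simp only [List.map_cons, List.sum_cons]
    have h1 := h a (by simp)
    have h2 := ih (fun x hx => h x (by simp [hx]))
    have h3 : (a + t.sum) * C = a * C + t.sum * C := by ring
    omega

private lemma bdd_set (f : ℕ → ℕ) (c n : ℕ) (h0 : f 0 = 0) :
    BddAbove {s : ℕ | ∃ l : List ℕ,
      l.sum ≤ n + c ∧ (∀ m ∈ l, m < n) ∧ s = (l.map f).sum} := by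
  classical
  refine ⟨(n + c) * ((Finset.range n).sup f), ?_⟩
  rintro s ⟨l, hsum, helem, rfl⟩
  set C := (Finset.range n).sup f with hC
  have hb : ∀ x ∈ l, f x ≤ x * C := by
    intro x hx
    rcases Nat.eq_zero_or_pos x with rfl | hxp
    · simp [h0]
    · have h1 : f x ≤ C := Finset.le_sup (Finset.mem_range.mpr (helem x hx))
      calc f x ≤ C := h1
        _ = 1 * C := (one_mul C).symm
        _ ≤ x * C := Nat.mul_le_mul_right C hxp
  calc (l.map f).sum ≤ l.sum * C := mapsum_le f C l hb
    _ ≤ (n + c) * C := Nat.mul_le_mul_right C hsum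

private lemma step_lemma (f : ℕ → ℕ) (M : ℕ)
    (hconv : ∀ k, k + 2 ≤ M → 2 * f (k + 1) ≤ f k + f (k + 2)) :
    ∀ w z, z ≤ w → w + 1 ≤ M → f (z + 1) + f w ≤ f z + f (w + 1) := by
  intro w
  induction w with
  | zero => intro z hz _; interval_cases z; omega
  | succ v ih =>
    intro z hz hw
    rcases Nat.lt_or_ge z (v + 1) with h | h
    · have h1 := ih z (by omega) (by omega)
      have h2 := hconv v (by omega)
      show f (z + 1) + f (v + 1) ≤ f z + f (v + 2)
      omega
    · have hzv : z = v + 1 := by omega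
      subst hzv
      omega

private lemma delta_lemma (f : ℕ → ℕ) (M : ℕ)
    (hconv : ∀ k, k + 2 ≤ M → 2 * f (k + 1) ≤ f k + f (k + 2)) :
    ∀ d x y, x ≤ y → y + d ≤ M → f (x + d) + f y ≤ f x + f (y + d) := by
  intro d
  induction d with
  | zero => intro x y _ _; simp
  | succ e ih =>
    intro x y hxy hM
    have h1 := ih x y hxy (by omega)
    have h2 := step_lemma f M hconv (y + e) (x + e) (by omega) (by omega)
    have e1 : x + (e + 1) = (x + e) + 1 := by ring
    have e2 : y + (e + 1) = (y + e) + 1 := by ring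
    rw [e1, e2]
    omega

private lemma lemB (f : ℕ → ℕ) (M : ℕ) (h0 : f 0 = 0)
    (hconv : ∀ k, k + 2 ≤ M → 2 * f (k + 1) ≤ f k + f (k + 2)) :
    ∀ l : List ℕ, (∀ x ∈ l, x ≤ M) →
      ∃ k r, r ≤ M ∧ k * M + r = l.sum ∧ (l.map f).sum ≤ k * f M + f r := by
  intro l
  induction l with
  | nil => exact fun _ => ⟨0, 0, Nat.zero_le M, by simp, by simp [h0]⟩
  | cons a t ih =>
    intro h
    obtain ⟨k, r, hr, hkr, hle⟩ := ih (fun x hx => h x (by simp [hx]))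
    have ha : a ≤ M := h a (by simp)
    rcases le_or_gt (a + r) M with hM | hM
    · refine ⟨k, a + r, hM, by simp only [List.sum_cons]; omega, ?_⟩
      have hd := delta_lemma f M hconv a 0 r (Nat.zero_le r) (by omega)
      simp only [Nat.zero_add, h0] at hd
      rw [show a + r = r + a from Nat.add_comm a r]
      simp only [List.map_cons, List.sum_cons]
      omega
    · refine ⟨k + 1, a + r - M, by omega, ?_, ?_⟩
      · have hx : (k + 1) * M = k * M + M := by ring
        simp only [List.sum_cons]
        omega
      · have hd := delta_lemma f M hconv (M - r) (a + r - M) r (by omega) (by omega)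
        rw [show a + r - M + (M - r) = a by omega, show r + (M - r) = M by omega] at hd
        have hx : (k + 1) * f M = k * f M + f M := by ring
        simp only [List.map_cons, List.sum_cons]
        omega

private lemma f_mono (c : ℕ) (f : ℕ → ℕ) (hf0 : f 0 = 0)
    (hf : ∀ n : ℕ, 1 ≤ n →
      f n = 1 + sSup {s : ℕ | ∃ l : List ℕ,
        l.sum ≤ n + c ∧ (∀ m ∈ l, m < n) ∧ s = (l.map f).sum}) :
    Monotone f := by
  apply monotone_nat_of_le_succ
  intro k
  rcases Nat.eq_zero_or_pos k with rfl | hk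
  · rw [hf0, hf 1 le_rfl]; omega
  · rw [hf k hk, hf (k + 1) (by omega)]
    have hsub : {s : ℕ | ∃ l : List ℕ, l.sum ≤ k + c ∧ (∀ m ∈ l, m < k) ∧ s = (l.map f).sum}
        ⊆ {s : ℕ | ∃ l : List ℕ, l.sum ≤ k + 1 + c ∧ (∀ m ∈ l, m < k + 1) ∧ s = (l.map f).sum} := by
      rintro s ⟨l, h1, h2, rfl⟩
      exact ⟨l, by omega, fun m hm => by have := h2 m hm; omega, rfl⟩
    have hne : {s : ℕ | ∃ l : List ℕ, l.sum ≤ k + c ∧ (∀ m ∈ l, m < k) ∧ s = (l.map f).sum}.Nonempty :=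
      ⟨0, ⟨[], by simp⟩⟩
    have := csSup_le_csSup (bdd_set f c (k + 1) hf0) hne hsub
    omega

private lemma f_convex (c : ℕ) (f : ℕ → ℕ) (hf0 : f 0 = 0)
    (hf : ∀ n : ℕ, 1 ≤ n →
      f n = 1 + sSup {s : ℕ | ∃ l : List ℕ,
        l.sum ≤ n + c ∧ (∀ m ∈ l, m < n) ∧ s = (l.map f).sum}) :
    ∀ m : ℕ, 2 * f (m + 1) ≤ f m + f (m + 2) := by
  intro m
  induction m using Nat.strong_induction_on with
  | _ m ih =>
  have hmono := f_mono c f hf0 hf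
  rcases Nat.eq_zero_or_pos m with rfl | hm
  · -- base case : 2 * f 1 ≤ f 0 + f 2
    have h1 : f 1 = 1 := by
      rw [hf 1 le_rfl]
      have hz : sSup {s : ℕ | ∃ l : List ℕ,
          l.sum ≤ 1 + c ∧ (∀ m ∈ l, m < 1) ∧ s = (l.map f).sum} = 0 := by
        refine le_antisymm (csSup_le ⟨0, ⟨[], by simp⟩⟩ ?_) (Nat.zero_le _)
        rintro s ⟨l, _, h2, rfl⟩
        have : (l.map f).sum = 0 := by
          apply List.sum_eq_zero
          intro x hx
          simp only [List.mem_map] at hx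
          obtain ⟨y, hy, rfl⟩ := hx
          have : y = 0 := by have := h2 y hy; omega
          simp [this, hf0]
        omega
      rw [hz]
    have hmem : (([1, 1] : List ℕ).map f).sum ∈ {s : ℕ | ∃ l : List ℕ,
        l.sum ≤ 2 + c ∧ (∀ m ∈ l, m < 2) ∧ s = (l.map f).sum} := by
      refine ⟨[1, 1], by simp, ?_, rfl⟩
      intro x hx; simp at hx; omega
    have h2 := le_csSup (bdd_set f c 2 hf0) hmem
    have hv : (([1, 1] : List ℕ).map f).sum = 2 := by simp [h1]
    rw [hv] at h2
    have h3 : f 2 = 1 + sSup {s : ℕ | ∃ l : List ℕ,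
        l.sum ≤ 2 + c ∧ (∀ m ∈ l, m < 2) ∧ s = (l.map f).sum} := hf 2 (by omega)
    rw [hf0, h1]
    show 2 * 1 ≤ 0 + f 2
    omega
  · -- inductive step, m ≥ 1
    have hconv : ∀ k, k + 2 ≤ m → 2 * f (k + 1) ≤ f k + f (k + 2) :=
      fun k hk => ih k (by omega)
    have hfA : f (m + 1) = 1 + sSup {s : ℕ | ∃ l : List ℕ,
        l.sum ≤ m + 1 + c ∧ (∀ x ∈ l, x < m + 1) ∧ s = (l.map f).sum} := hf (m + 1) (by omega)
    have hfB : f (m + 2) = 1 + sSup {s : ℕ | ∃ l : List ℕ,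
        l.sum ≤ m + 2 + c ∧ (∀ x ∈ l, x < m + 2) ∧ s = (l.map f).sum} := hf (m + 2) (by omega)
    have hB0 : f (m + 1) ≤ sSup {s : ℕ | ∃ l : List ℕ,
        l.sum ≤ m + 2 + c ∧ (∀ x ∈ l, x < m + 2) ∧ s = (l.map f).sum} := by
      have hmem : (([m + 1] : List ℕ).map f).sum ∈ {s : ℕ | ∃ l : List ℕ,
          l.sum ≤ m + 2 + c ∧ (∀ x ∈ l, x < m + 2) ∧ s = (l.map f).sum} := by
        refine ⟨[m + 1], by simp; omega, ?_, rfl⟩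
        intro x hx; simp at hx; omega
      have := le_csSup (bdd_set f c (m + 2) hf0) hmem
      simpa using this
    have key : ∀ s ∈ {s : ℕ | ∃ l : List ℕ,
        l.sum ≤ m + 1 + c ∧ (∀ x ∈ l, x < m + 1) ∧ s = (l.map f).sum},
        s + f (m + 1) ≤ sSup {s : ℕ | ∃ l : List ℕ,
          l.sum ≤ m + 2 + c ∧ (∀ x ∈ l, x < m + 2) ∧ s = (l.map f).sum} + f m := by
      rintro s ⟨l, hsum, helem, rfl⟩
      obtain ⟨k, r, hr, hkr, hle⟩ :=
        lemB f m hf0 hconv l (fun x hx => by have := helem x hx; omega)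
      rcases Nat.eq_zero_or_pos k with rfl | hk
      · have hfr : f r ≤ f m := hmono hr
        omega
      · set l' : List ℕ := (m + 1) :: (List.replicate (k - 1) m ++ [r]) with hl'
        have hsum' : l'.sum = (m + 1) + ((k - 1) * m + r) := by
          simp [hl', List.sum_replicate, smul_eq_mul]
        have hval : (l'.map f).sum = f (m + 1) + ((k - 1) * f m + f r) := by
          simp [hl', List.sum_replicate, smul_eq_mul, List.map_replicate]
        have hkm : k * m = (k - 1) * m + m := by
          cases k with
          | zero => omega
          | succ k' => simp [Nat.succ_sub_one, Nat.succ_mul]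
        have hkfm : k * f m = (k - 1) * f m + f m := by
          cases k with
          | zero => omega
          | succ k' => simp [Nat.succ_sub_one, Nat.succ_mul]
        have hmem : (l'.map f).sum ∈ {s : ℕ | ∃ l : List ℕ,
            l.sum ≤ m + 2 + c ∧ (∀ x ∈ l, x < m + 2) ∧ s = (l.map f).sum} := by
          refine ⟨l', by omega, ?_, rfl⟩
          intro x hx
          simp only [hl', List.mem_cons, List.mem_append, List.mem_replicate,
            List.mem_singleton] at hx
          rcases hx with rfl | ⟨_, rfl⟩ | rfl | hx
          · omega
          · omega
          · omega
          · simp at hx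
        have hB' := le_csSup (bdd_set f c (m + 2) hf0) hmem
        omega
    have hA0 : (0 : ℕ) ∈ {s : ℕ | ∃ l : List ℕ,
        l.sum ≤ m + 1 + c ∧ (∀ x ∈ l, x < m + 1) ∧ s = (l.map f).sum} := ⟨[], by simp⟩
    have h1 := key 0 hA0
    have h2 : sSup {s : ℕ | ∃ l : List ℕ,
        l.sum ≤ m + 1 + c ∧ (∀ x ∈ l, x < m + 1) ∧ s = (l.map f).sum}
        ≤ sSup {s : ℕ | ∃ l : List ℕ,
          l.sum ≤ m + 2 + c ∧ (∀ x ∈ l, x < m + 2) ∧ s = (l.map f).sum} + f m - f (m + 1) :=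
      csSup_le ⟨0, hA0⟩ (fun s hs => by have := key s hs; omega)
    omega

/-- The first difference of f is nondecreasing: f(n) - f(n-1) ≥ f(n-1) - f(n-2) for n ≥ 2. -/
theorem stmt_5 (c : ℕ) (hc : 1 ≤ c) (f : ℕ → ℕ) (hf0 : f 0 = 0)
    (hf : ∀ n : ℕ, 1 ≤ n →
      f n = 1 + sSup {s : ℕ | ∃ l : List ℕ,
        l.sum ≤ n + c ∧ (∀ m ∈ l, m < n) ∧ s = (l.map f).sum}) :
    ∀ n : ℕ, 2 ≤ n → f (n - 1) - f (n - 2) ≤ f n - f (n - 1) := by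
  intro n hn
  have hmono := f_mono c f hf0 hf
  have hcv := f_convex c f hf0 hf (n - 2)
  rw [show n - 2 + 1 = n - 1 by omega, show n - 2 + 2 = n by omega] at hcv
  have m1 : f (n - 2) ≤ f (n - 1) := hmono (by omega)
  have m2 : f (n - 1) ≤ f n := hmono (by omega)
  omega
end

section
/- Let c ≥ 1 and define f : ℕ → ℕ by f(0) = 0 and f(n) = 1 + max { Σᵢ f(nᵢ) : finite sequences with Σᵢ nᵢ ≤ n + c, each nᵢ < n }. Then for all n ≥ c + 2, f(n) = f(n-1) + f(c+2) - f(c+1). Consequently f(n) is bounded above by a linear function of n: there exist constants A, B with f(n) ≤ A·n + B for all n. -/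
namespace Stmt6Aux

/-- Removing zero entries does not change the sum of `g` over a list, when `g 0 = 0`. -/
lemma filter_map_sum (g : ℕ → ℕ) (hg : g 0 = 0) (l : List ℕ) :
    ((l.filter (fun m => m ≠ 0)).map g).sum = (l.map g).sum := by
  induction l with
  | nil => simp
  | cons a t ih =>
    rcases eq_or_ne a 0 with rfl | ha
    · simpa [hg] using ih
    · simpa [List.filter_cons, ha] using ih

lemma filter_sum (l : List ℕ) : (l.filter (fun m => m ≠ 0)).sum = l.sum := by
  simpa using filter_map_sum id rfl l

lemma length_le_sum (t : List ℕ) (h : ∀ m ∈ t, 1 ≤ m) : t.length ≤ t.sum := by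
  induction t with
  | nil => simp
  | cons a s ih =>
    have h1 := h a (by simp)
    have h2 := ih (fun m hm => h m (by simp [hm]))
    simp only [List.length_cons, List.sum_cons]
    omega

/-- The generic family of sets appearing in the recursion. -/
def SS (f : ℕ → ℕ) (N n : ℕ) : Set ℕ :=
  {s : ℕ | ∃ l : List ℕ, l.sum ≤ N ∧ (∀ m ∈ l, m < n) ∧ s = (l.map f).sum}

lemma SS_nonempty (f : ℕ → ℕ) (N n : ℕ) : (SS f N n).Nonempty :=
  ⟨0, ⟨[], by simp⟩⟩

lemma SS_bdd (f : ℕ → ℕ) (hf0 : f 0 = 0) (N n : ℕ) : BddAbove (SS f N n) := by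
  refine ⟨N * ((Finset.range n).sup f), fun s hs => ?_⟩
  obtain ⟨l, hsum, hmem, rfl⟩ := hs
  have e1 : ((l.filter (fun m => m ≠ 0)).map f).sum = (l.map f).sum := filter_map_sum f hf0 l
  have e2 : (l.filter (fun m => m ≠ 0)).sum = l.sum := filter_sum l
  have hpos : ∀ m ∈ l.filter (fun m => m ≠ 0), 1 ≤ m := by
    intro m hm
    have h1 := List.of_mem_filter hm
    simp only [ne_eq, decide_not, Bool.not_eq_true', decide_eq_false_iff_not] at h1
    omega
  have hlen : (l.filter (fun m => m ≠ 0)).length ≤ l.sum := by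
    rw [← e2]; exact length_le_sum _ hpos
  have h2 : ((l.filter (fun m => m ≠ 0)).map f).sum ≤
      ((l.filter (fun m => m ≠ 0)).map f).length * ((Finset.range n).sup f) := by
    have := List.sum_le_card_nsmul ((l.filter (fun m => m ≠ 0)).map f)
      ((Finset.range n).sup f) ?_
    · simpa [smul_eq_mul] using this
    · intro x hx
      obtain ⟨m, hm, rfl⟩ := List.mem_map.mp hx
      exact Finset.le_sup (Finset.mem_range.mpr (hmem m (List.mem_of_mem_filter hm)))
  calc (l.map f).sum = ((l.filter (fun m => m ≠ 0)).map f).sum := e1.symm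
    _ ≤ ((l.filter (fun m => m ≠ 0)).map f).length * ((Finset.range n).sup f) := h2
    _ = (l.filter (fun m => m ≠ 0)).length * ((Finset.range n).sup f) := by
        rw [List.length_map]
    _ ≤ N * ((Finset.range n).sup f) := Nat.mul_le_mul_right _ (by omega)

/-- `bB c f n` is the best value of a list with sum at most `c+1` and entries `< n`. -/
noncomputable def bB (c : ℕ) (f : ℕ → ℕ) (n : ℕ) : ℕ := sSup (SS f (c + 1) n)

lemma bB_mono (c : ℕ) (f : ℕ → ℕ) (hf0 : f 0 = 0) {n m : ℕ} (h : n ≤ m) :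
    bB c f n ≤ bB c f m := by
  apply csSup_le (SS_nonempty f _ _)
  rintro b ⟨l, h1, h2, h3⟩
  exact le_csSup (SS_bdd f hf0 _ _) ⟨l, h1, fun x hx => lt_of_lt_of_le (h2 x hx) h, h3⟩

lemma bB_stable (c : ℕ) (f : ℕ → ℕ) (hf0 : f 0 = 0) {n : ℕ} (h : c + 2 ≤ n) :
    bB c f n = bB c f (c + 2) := by
  refine le_antisymm ?_ (bB_mono c f hf0 h)
  apply csSup_le (SS_nonempty f _ _)
  rintro b ⟨l, h1, h2, h3⟩
  refine le_csSup (SS_bdd f hf0 _ _) ⟨l, h1, fun x hx => ?_, h3⟩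
  have hx1 : x ≤ l.sum := List.single_le_sum (fun y _ => Nat.zero_le y) x hx
  omega

/-- auxiliary: sum of squares bound. -/
lemma sq_sum_le (n : ℕ) (l : List ℕ) (h : ∀ m ∈ l, m < n) :
    (l.map (fun x => x * x)).sum + l.sum ≤ n * l.sum := by
  induction l with
  | nil => simp
  | cons a t ih =>
    have ha : a + 1 ≤ n := h a (by simp)
    have ht := ih (fun m hm => h m (by simp [hm]))
    simp only [List.map_cons, List.sum_cons]
    have h1 : a * a + a ≤ a * n := by
      calc a * a + a = a * (a + 1) := by ring
        _ ≤ a * n := Nat.mul_le_mul_left a ha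
    have h2 : n * (a + t.sum) = n * a + n * t.sum := by ring
    have h3 : a * n = n * a := Nat.mul_comm a n
    linarith

set_option maxHeartbeats 2000000 in
/-- The main structural lemma: `f (n+1) = 1 + f n + bB c f (n+1)`. -/
lemma mainP (c : ℕ) (f : ℕ → ℕ) (hf0 : f 0 = 0)
    (hf : ∀ n : ℕ, 1 ≤ n → f n = 1 + sSup (SS f (n + c) n)) :
    ∀ n : ℕ, f (n + 1) = 1 + f n + bB c f (n + 1) := by
  intro n
  induction n using Nat.strong_induction_on with
  | _ n IH =>
  -- monotonicity and convexity consequences of the induction hypothesis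
  have step : ∀ m, m < n → f m ≤ f (m + 1) := by
    intro m hm
    have := IH m hm
    omega
  have mono' : ∀ d a, a + d ≤ n → f a ≤ f (a + d) := by
    intro d
    induction d with
    | zero => intro a _; simp
    | succ d ih =>
      intro a hle
      have h1 := ih a (by omega)
      have h2 := step (a + d) (by omega)
      have h3 : a + (d + 1) = (a + d) + 1 := by omega
      rw [h3]
      exact le_trans h1 h2
  have shift : ∀ a d, d ≤ a → a < n → f a + f (d + 1) ≤ f (a + 1) + f d := by
    intro a d hda han
    have hA := IH a han
    have hD := IH d (by omega)
    have hb : bB c f (d + 1) ≤ bB c f (a + 1) := bB_mono c f hf0 (by omega)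
    omega
  have bddB : ∀ m : ℕ, BddAbove (SS f (c + 1) m) := fun m => SS_bdd f hf0 _ _
  -- the key claim, by strong induction on the fuel `k`
  have claim : ∀ k : ℕ, ∀ l : List ℕ, (∀ m ∈ l, 0 < m ∧ m ≤ n) → l.sum ≤ n + c + 1 →
      (n + c + 1) * n ≤ (l.map (fun x => x * x)).sum + k →
      (l.map f).sum ≤ f n + bB c f (n + 1) := by
    intro k
    induction k using Nat.strong_induction_on with
    | _ k ihk =>
    intro l hl hsum hmeas
    by_cases hn : n ∈ l
    · have hp : l.Perm (n :: l.erase n) := List.perm_cons_erase hn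
      have hsum' : l.sum = n + (l.erase n).sum := by
        have := hp.sum_eq; simpa using this
      have h1 : (l.map f).sum = f n + ((l.erase n).map f).sum := by
        have := (hp.map f).sum_eq; simpa using this
      have h2 : ((l.erase n).map f).sum ≤ bB c f (n + 1) := by
        apply le_csSup (bddB _)
        exact ⟨l.erase n, by omega,
          fun m hm => by have := (hl m (List.mem_of_mem_erase hm)).2; omega, rfl⟩
      omega
    · by_cases hs : l.sum ≤ c + 1
      · have h2 : (l.map f).sum ≤ bB c f (n + 1) := by
          apply le_csSup (bddB _)
          exact ⟨l, hs, fun m hm => by have := (hl m hm).2; omega, rfl⟩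
        omega
      · -- the list has at least two elements; shift mass between two of them
        match l, hl, hsum, hmeas, hn, hs with
        | [], hl, hsum, hmeas, hn, hs => simp at hs
        | [a], hl, hsum, hmeas, hn, hs =>
          have ha := hl a (by simp)
          have := mono' (n - a) a (by omega)
          have hna : a + (n - a) = n := by omega
          rw [hna] at this
          simp only [List.map_cons, List.map_nil, List.sum_cons, List.sum_nil]
          omega
        | a :: b :: rest, hl, hsum, hmeas, hn, hs =>
          have ha := hl a (by simp)
          have hb := hl b (by simp)
          have han : a < n := by
            by_contra h
            exact hn (by simp only [List.mem_cons]; left; omega)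
          have hbn : b < n := by
            by_contra h
            exact hn (by simp only [List.mem_cons]; right; left; omega)
          have hrest : ∀ m ∈ rest, 0 < m ∧ m < n := by
            intro m hm
            have h1 := hl m (by simp [hm])
            refine ⟨h1.1, ?_⟩
            by_contra h
            have hmn : m = n := by omega
            exact hn (by simp only [List.mem_cons]; right; right; rw [← hmn]; exact hm)
          -- order the two entries
          obtain ⟨x, y, hyx, hfab, hsab, hsqab, hx0, hxn, hy0, hyn⟩ :
              ∃ x y : ℕ, y ≤ x ∧ f a + f b = f x + f y ∧ a + b = x + y ∧
                a * a + b * b = x * x + y * y ∧ 0 < x ∧ x < n ∧ 0 < y ∧ y < n := by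
            rcases le_total b a with h | h
            · exact ⟨a, b, h, rfl, rfl, rfl, ha.1, han, hb.1, hbn⟩
            · exact ⟨b, a, h, by omega, by omega, by omega, hb.1, hbn, ha.1, han⟩
          obtain ⟨y', rfl⟩ : ∃ y', y = y' + 1 := ⟨y - 1, by omega⟩
          have hshift : f x + f (y' + 1) ≤ f (x + 1) + f y' := shift x y' (by omega) hxn
          -- the shifted list, with zeros removed
          have eLsum : (((x+1) :: y' :: rest).filter (fun m => m ≠ 0)).sum
              = a + (b + rest.sum) := by
            rw [filter_sum]
            simp only [List.sum_cons]
            omega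
          have eLf : ((((x+1) :: y' :: rest).filter (fun m => m ≠ 0)).map f).sum
              = f (x+1) + (f y' + (rest.map f).sum) := by
            rw [filter_map_sum f hf0]
            simp only [List.map_cons, List.sum_cons]
          have eLsq : a * a + (b * b + (rest.map (fun x => x * x)).sum) + 2 ≤
              ((((x+1) :: y' :: rest).filter (fun m => m ≠ 0)).map (fun x => x * x)).sum := by
            rw [filter_map_sum (fun x => x * x) (by simp)]
            simp only [List.map_cons, List.sum_cons]
            have hx2 : x * x + (y' + 1) * (y' + 1) + 2 ≤ (x + 1) * (x + 1) + y' * y' := by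
              nlinarith [hyx]
            linarith [hsqab]
          have hLmem : ∀ m ∈ ((x+1) :: y' :: rest).filter (fun m => m ≠ 0),
              0 < m ∧ m ≤ n := by
            intro m hm
            have h1 := List.of_mem_filter hm
            simp only [ne_eq, decide_not, Bool.not_eq_true', decide_eq_false_iff_not] at h1
            have h2 := List.mem_of_mem_filter hm
            simp only [List.mem_cons] at h2
            rcases h2 with rfl | rfl | h2
            · exact ⟨by omega, by omega⟩
            · exact ⟨by omega, by omega⟩
            · exact ⟨(hrest m h2).1, le_of_lt (hrest m h2).2⟩
          -- derive that the fuel is positive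
          simp only [List.map_cons, List.sum_cons] at hmeas hsum hs
          have hk1 : 1 ≤ k := by
            have hsq := sq_sum_le n (a :: b :: rest) (fun m hm => by
              simp only [List.mem_cons] at hm
              rcases hm with rfl | rfl | hm
              · exact han
              · exact hbn
              · exact (hrest m hm).2)
            simp only [List.map_cons, List.sum_cons] at hsq
            have h5 : n * (a + (b + rest.sum)) ≤ n * (n + c + 1) :=
              Nat.mul_le_mul_left n (by omega)
            have h6 : (n + c + 1) * n = n * (n + c + 1) := Nat.mul_comm _ _
            linarith
          -- recurse
          have hrec := ihk (k - 1) (by omega) (((x+1) :: y' :: rest).filter (fun m => m ≠ 0))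
            hLmem (by rw [eLsum]; omega) (by
              have hk2 : k - 1 + 1 = k := by omega
              linarith [eLsq, hmeas, hk1, Nat.sub_add_cancel hk1])
          rw [eLf] at hrec
          simp only [List.map_cons, List.sum_cons]
          omega
  -- now prove the recursion identity
  rw [hf (n + 1) (by omega)]
  have hle : sSup (SS f (n + 1 + c) (n + 1)) ≤ f n + bB c f (n + 1) := by
    apply csSup_le (SS_nonempty f _ _)
    rintro s ⟨l, hsum, hmem, rfl⟩
    have h1 := claim ((n + c + 1) * n) (l.filter (fun m => m ≠ 0)) ?_ ?_ ?_
    · rwa [filter_map_sum f hf0 l] at h1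
    · intro m hm
      have h1 := List.of_mem_filter hm
      simp only [ne_eq, decide_not, Bool.not_eq_true', decide_eq_false_iff_not] at h1
      have h2 := hmem m (List.mem_of_mem_filter hm)
      exact ⟨by omega, by omega⟩
    · rw [filter_sum]; omega
    · exact Nat.le_add_left _ _
  have hge : f n + bB c f (n + 1) ≤ sSup (SS f (n + 1 + c) (n + 1)) := by
    have hmem0 : bB c f (n + 1) ∈ SS f (c + 1) (n + 1) :=
      Nat.sSup_mem (SS_nonempty f _ _) (bddB _)
    obtain ⟨l₀, h1, h2, h3⟩ := hmem0
    apply le_csSup (SS_bdd f hf0 _ _)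
    refine ⟨n :: l₀, ?_, ?_, ?_⟩
    · simp only [List.sum_cons]; omega
    · intro m hm
      rcases List.mem_cons.mp hm with rfl | hm
      · omega
      · exact h2 m hm
    · simp only [List.map_cons, List.sum_cons]
      rw [h3]
  omega

end Stmt6Aux

/-- For n ≥ c+2, f(n) = f(n-1) + f(c+2) - f(c+1) (stated additively to avoid truncated
subtraction), and consequently f is bounded above by a linear function. -/
theorem stmt_6 (c : ℕ) (hc : 1 ≤ c) (f : ℕ → ℕ) (hf0 : f 0 = 0)
    (hf : ∀ n : ℕ, 1 ≤ n →
      f n = 1 + sSup {s : ℕ | ∃ l : List ℕ,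
        l.sum ≤ n + c ∧ (∀ m ∈ l, m < n) ∧ s = (l.map f).sum}) :
    (∀ n : ℕ, c + 2 ≤ n → f n + f (c + 1) = f (n - 1) + f (c + 2)) ∧
    ∃ A B : ℕ, ∀ n : ℕ, f n ≤ A * n + B := by
  have hf' : ∀ n : ℕ, 1 ≤ n → f n = 1 + sSup (Stmt6Aux.SS f (n + c) n) := hf
  have hP := Stmt6Aux.mainP c f hf0 hf'
  constructor
  · intro n hn
    obtain ⟨m, rfl⟩ : ∃ m, n = m + 1 := ⟨n - 1, by omega⟩
    have h1 := hP m
    have h2 := hP (c + 1)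
    have h3 : Stmt6Aux.bB c f (m + 1) = Stmt6Aux.bB c f (c + 2) :=
      Stmt6Aux.bB_stable c f hf0 (by omega)
    have h4 : c + 1 + 1 = c + 2 := rfl
    rw [h4] at h2
    simp only [Nat.add_sub_cancel]
    omega
  · refine ⟨1 + Stmt6Aux.bB c f (c + 2), 0, ?_⟩
    intro n
    induction n with
    | zero => simp [hf0]
    | succ n ih =>
      have h1 := hP n
      have hb : Stmt6Aux.bB c f (n + 1) ≤ Stmt6Aux.bB c f (c + 2) := by
        rcases le_total (n + 1) (c + 2) with h | h
        · exact Stmt6Aux.bB_mono c f hf0 h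
        · exact le_of_eq (Stmt6Aux.bB_stable c f hf0 h)
      calc f (n + 1) = 1 + f n + Stmt6Aux.bB c f (n + 1) := h1
        _ ≤ 1 + ((1 + Stmt6Aux.bB c f (c + 2)) * n + 0) + Stmt6Aux.bB c f (c + 2) :=
            Nat.add_le_add (Nat.add_le_add_left ih 1) hb
        _ = (1 + Stmt6Aux.bB c f (c + 2)) * (n + 1) + 0 := by ring
end

section
/- Let φ : ℕ → ℕ and c ≥ 1 be such that φ(0) = 0 and for every n ≥ 1, φ(n) ≤ 1 + Σᵢ φ(nᵢ) for some finite sequence of nonnegative integers nᵢ with Σᵢ nᵢ ≤ n + c and each nᵢ < n. Then φ is bounded above by a linear function: there exists K > 0 such that φ(n) ≤ K·n for all n ≥ 1. -/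
/-!
With `T = c + 1`, let `A` bound `φ` on `[0, T]` and put `B = 1 + A c`; then
`φ n ≤ A n + B (n - T)⁺` by strong induction. The term `A n` absorbs the slack `+ c` of a
decomposition at the price `A c`. The excess `Σ (nᵢ - T)⁺` is at most `n - T - 1`: either at most
one piece exceeds `T`, and it is `< n`, or two pieces do, and each of them pays `T > c` out of
`Σ nᵢ ≤ n + c`. So the excess term drops by `B = 1 + A c`, which pays for the slack and the `1`.
-/

def IsDecomposable (c : ℕ) (φ : ℕ → ℕ) : Prop :=
  ∀ n : ℕ, 1 ≤ n → ∃ l : List ℕ, l.sum ≤ n + c ∧ (∀ m ∈ l, m < n) ∧ φ n ≤ 1 + (l.map φ).sum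

namespace List

theorem sum_map_tsub_eq_zero {l : List ℕ} {T : ℕ} (h : ∀ m ∈ l, m ≤ T) :
    (l.map (· - T)).sum = 0 :=
  sum_eq_zero fun x hx => by
    obtain ⟨m, hm, rfl⟩ := mem_map.1 hx
    exact Nat.sub_eq_zero_of_le (h m hm)

theorem sum_map_tsub_add_le {l : List ℕ} {T b : ℕ} (hb : b ∈ l) (hTb : T ≤ b) :
    (l.map (· - T)).sum + T ≤ l.sum := by
  have hrest : ((l.erase b).map (· - T)).sum ≤ ((l.erase b).map id).sum :=
    sum_le_sum fun m _ => Nat.sub_le m T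
  rw [← sum_map_erase _ hb, ← sum_erase hb]
  simp only [map_id] at hrest
  omega

theorem sum_map_tsub_le_of_forall_lt {l : List ℕ} {n c T : ℕ} (hlt : ∀ m ∈ l, m < n)
    (hsum : l.sum ≤ n + c) (hcT : c < T) : (l.map (· - T)).sum ≤ n - (T + 1) := by
  by_cases hbig : ∃ a ∈ l, T < a
  · obtain ⟨a, ha, hTa⟩ := hbig
    have han := hlt a ha
    rw [← sum_map_erase _ ha]
    rw [← sum_erase ha] at hsum
    by_cases hsecond : ∃ b ∈ l.erase a, T < b
    · obtain ⟨b, hb, hTb⟩ := hsecond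
      have := sum_map_tsub_add_le hb hTb.le
      omega
    · push Not at hsecond
      rw [sum_map_tsub_eq_zero hsecond]
      omega
  · push Not at hbig
    rw [sum_map_tsub_eq_zero hbig]
    exact Nat.zero_le _

end List

theorem IsDecomposable.le_mul_add_mul_tsub {c : ℕ} {φ : ℕ → ℕ} (hφ : IsDecomposable c φ)
    (hφ0 : φ 0 = 0) {A : ℕ} (hA : ∀ n ≤ c + 1, φ n ≤ A) (n : ℕ) :
    φ n ≤ A * n + (1 + A * c) * (n - (c + 1)) := by
  set B := 1 + A * c
  induction n using Nat.strong_induction_on with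
  | _ n ih =>
  rcases n.eq_zero_or_pos with rfl | hpos
  · simp [hφ0]
  rcases le_or_gt n (c + 1) with hsmall | hbig
  · calc φ n ≤ A * 1 := by simpa using hA n hsmall
      _ ≤ A * n + B * (n - (c + 1)) := le_add_right (Nat.mul_le_mul_left A hpos)
  obtain ⟨l, hsum, hlt, hφn⟩ := hφ n hpos
  have hpieces : (l.map φ).sum ≤ A * l.sum + B * (l.map (· - (c + 1))).sum :=
    calc (l.map φ).sum ≤ (l.map fun m => A * m + B * (m - (c + 1))).sum :=
          List.sum_le_sum fun m hm => ih m (hlt m hm)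
      _ = A * l.sum + B * (l.map (· - (c + 1))).sum := by
          rw [List.sum_map_add, List.sum_map_mul_left, List.sum_map_mul_left, List.map_id']
  have hexcess := List.sum_map_tsub_le_of_forall_lt hlt hsum (Nat.lt_succ_self c)
  obtain ⟨k, rfl⟩ : ∃ k, n = k + (c + 2) := ⟨n - (c + 2), by omega⟩
  calc φ (k + (c + 2)) ≤ 1 + A * (k + (c + 2) + c) + B * k := by
        rw [show k + (c + 2) - (c + 1 + 1) = k by omega] at hexcess
        linarith [Nat.mul_le_mul_left A hsum, Nat.mul_le_mul_left B hexcess]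
    _ = A * (k + (c + 2)) + B * (k + (c + 2) - (c + 1)) := by
        rw [show k + (c + 2) - (c + 1) = k + 1 by omega]
        ring

theorem stmt_7_general (c : ℕ) (φ : ℕ → ℕ) (hφ0 : φ 0 = 0)
    (hφ : ∀ n : ℕ, 1 ≤ n → ∃ l : List ℕ,
      l.sum ≤ n + c ∧ (∀ m ∈ l, m < n) ∧ φ n ≤ 1 + (l.map φ).sum) :
    ∃ K : ℕ, 0 < K ∧ ∀ n : ℕ, 1 ≤ n → φ n ≤ K * n := by
  set A := (Finset.range (c + 2)).sup φ
  have hA : ∀ n ≤ c + 1, φ n ≤ A := fun n hn => Finset.le_sup (Finset.mem_range.2 (by omega))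
  refine ⟨A + (1 + A * c), by omega, fun n _ => ?_⟩
  calc φ n ≤ A * n + (1 + A * c) * (n - (c + 1)) := IsDecomposable.le_mul_add_mul_tsub hφ hφ0 hA n
    _ ≤ A * n + (1 + A * c) * n := by gcongr; omega
    _ = (A + (1 + A * c)) * n := by ring

/-- Any φ with φ(0)=0 satisfying the decomposability recursion φ(n) ≤ 1 + Σ φ(nᵢ) with
Σ nᵢ ≤ n + c and nᵢ < n is bounded above by a linear function. -/
theorem stmt_7 (c : ℕ) (hc : 1 ≤ c) (φ : ℕ → ℕ) (hφ0 : φ 0 = 0)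
    (hφ : ∀ n : ℕ, 1 ≤ n → ∃ l : List ℕ,
      l.sum ≤ n + c ∧ (∀ m ∈ l, m < n) ∧ φ n ≤ 1 + (l.map φ).sum) :
    ∃ K : ℕ, 0 < K ∧ ∀ n : ℕ, 1 ≤ n → φ n ≤ K * n :=
  stmt_7_general c φ hφ0 hφ
end

section
/- In the free group F on generators a₁, b₁, c₁, c₂, c₃, every word read along a proper (nonempty, not the whole circuit) cyclic subpath of the boundary word a₂b₁b₂a₂⁻¹a₁⁻¹b₂⁻¹c₁c₂c₃ — interpreted in the group G = ℤ² * F₄ via the isomorphism of the paper — represents a nontrivial element of G. In particular, each proper cyclic subword of the relator a₁⁻¹b₁c₁c₂c₃ represents a nontrivial element of ℤ² * F₄. -/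
/-!
Abelianize: the second relator eliminates `a₁ = b₁c₁c₂c₃`, after which the first relator
becomes trivial, so `G` maps onto `ℤ⁶` with basis the images of `a₂, b₁, b₂, c₁, c₂, c₃`.
Every proper cyclic subword of either relator already has nonzero image in `ℤ⁶`, which is
a finite computation.
-/

namespace TwoRelatorPresentation

section CyclicSubwords

variable {M N : Type*} [Monoid M] [Monoid N]

def ProperCyclicSubwordsNeOne (l : List M) : Prop :=
  ∀ i k : ℕ, 1 ≤ k → k < l.length → ((l.rotate i).take k).prod ≠ 1

theorem properCyclicSubwordsNeOne_of_rotate_lt {l : List M}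
    (h : ∀ i < l.length, ∀ k, 1 ≤ k → k < l.length → ((l.rotate i).take k).prod ≠ 1) :
    ProperCyclicSubwordsNeOne l := by
  intro i k hk hkl
  have hpos : 0 < l.length := by omega
  rw [← List.rotate_mod]
  exact h _ (Nat.mod_lt _ hpos) k hk hkl

theorem ProperCyclicSubwordsNeOne.of_map {F : Type*} [FunLike F M N] [MonoidHomClass F M N]
    (f : F) {l : List M} (h : ProperCyclicSubwordsNeOne (l.map f)) :
    ProperCyclicSubwordsNeOne l := by
  intro i k hk hkl hprod
  refine h i k hk (by simpa using hkl) ?_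
  rw [← List.map_rotate, ← List.map_take, ← map_list_prod, hprod, map_one]

end CyclicSubwords

def relators : Set (FreeGroup (Fin 7)) :=
  {FreeGroup.of 1 * FreeGroup.of 2 * FreeGroup.of 3 * (FreeGroup.of 1)⁻¹ *
      (FreeGroup.of 0)⁻¹ * (FreeGroup.of 3)⁻¹ * FreeGroup.of 4 * FreeGroup.of 5 *
      FreeGroup.of 6,
    (FreeGroup.of 0)⁻¹ * FreeGroup.of 2 * FreeGroup.of 4 * FreeGroup.of 5 *
      FreeGroup.of 6}

/-- `a₁ ↦ b₁ + c₁ + c₂ + c₃`; the other six generators go to the standard basis of `ℤ⁶`. -/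
def abelianImage : Fin 7 → Multiplicative (Fin 6 → ℤ) :=
  fun i => Multiplicative.ofAdd <|
    ![![0, 1, 0, 1, 1, 1], ![1, 0, 0, 0, 0, 0], ![0, 1, 0, 0, 0, 0], ![0, 0, 1, 0, 0, 0],
      ![0, 0, 0, 1, 0, 0], ![0, 0, 0, 0, 1, 0], ![0, 0, 0, 0, 0, 1]] i

theorem lift_abelianImage_relator : ∀ r ∈ relators, FreeGroup.lift abelianImage r = 1 := by
  rintro r (rfl | rfl) <;> simp only [map_mul, map_inv, FreeGroup.lift_apply_of] <;> decide

def toAbelian : PresentedGroup relators →* Multiplicative (Fin 6 → ℤ) :=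
  PresentedGroup.toGroup lift_abelianImage_relator

abbrev gen : Fin 7 → PresentedGroup relators := PresentedGroup.of

theorem toAbelian_gen (i : Fin 7) : toAbelian (gen i) = abelianImage i :=
  PresentedGroup.toGroup.of lift_abelianImage_relator

theorem properCyclicSubwordsNeOne_relator₁ :
    ProperCyclicSubwordsNeOne
      [gen 1, gen 2, gen 3, (gen 1)⁻¹, (gen 0)⁻¹, (gen 3)⁻¹, gen 4, gen 5, gen 6] := by
  refine .of_map toAbelian ?_
  simp only [List.map_cons, List.map_nil, map_inv, toAbelian_gen]
  exact properCyclicSubwordsNeOne_of_rotate_lt (by decide)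

theorem properCyclicSubwordsNeOne_relator₂ :
    ProperCyclicSubwordsNeOne [(gen 0)⁻¹, gen 2, gen 4, gen 5, gen 6] := by
  refine .of_map toAbelian ?_
  simp only [List.map_cons, List.map_nil, map_inv, toAbelian_gen]
  exact properCyclicSubwordsNeOne_of_rotate_lt (by decide)

end TwoRelatorPresentation

open TwoRelatorPresentation in
/-- Generators: 0 ↦ a₁, 1 ↦ a₂, 2 ↦ b₁, 3 ↦ b₂, 4 ↦ c₁, 5 ↦ c₂, 6 ↦ c₃. -/
theorem stmt_13 :
    let rels : Set (FreeGroup (Fin 7)) :=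
      {FreeGroup.of 1 * FreeGroup.of 2 * FreeGroup.of 3 * (FreeGroup.of 1)⁻¹ *
          (FreeGroup.of 0)⁻¹ * (FreeGroup.of 3)⁻¹ * FreeGroup.of 4 * FreeGroup.of 5 *
          FreeGroup.of 6,
        (FreeGroup.of 0)⁻¹ * FreeGroup.of 2 * FreeGroup.of 4 * FreeGroup.of 5 *
          FreeGroup.of 6}
    let G := PresentedGroup rels
    let of : Fin 7 → G := PresentedGroup.of
    let w₁ : List G :=
      [of 1, of 2, of 3, (of 1)⁻¹, (of 0)⁻¹, (of 3)⁻¹, of 4, of 5, of 6]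
    let w₂ : List G := [(of 0)⁻¹, of 2, of 4, of 5, of 6]
    (∀ i k : ℕ, 1 ≤ k → k < 9 → ((w₁.rotate i).take k).prod ≠ 1) ∧
      (∀ i k : ℕ, 1 ≤ k → k < 5 → ((w₂.rotate i).take k).prod ≠ 1) := by
  exact ⟨properCyclicSubwordsNeOne_relator₁, properCyclicSubwordsNeOne_relator₂⟩
end
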